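/- arXiv:0804.1263 — 2 statements merged into one kernel-verified Lean document; each statement's English description precedes it below -/
import Mathlib

section
/- Fix A > 0, B̃ > 0 and k > 0. Let M := { f ∈ C[0,1] : ∃ 0 ≤ s ≤ t ≤ 1 with f(t) − f(s) − B̃(t−s) ≥ k/A }. Then inf_{f∈M} I(f) = (1/2)(k/A + B̃)² if B̃ ≤ k/A, and = 2B̃k/A otherwise, where I(f) = (1/2)∫_0^1 (f'(u))² du for absolutely continuous f with L² derivative and I(f) = +∞ otherwise. -/
open MeasureTheory
open scoped ENNReal

/-- The Schilder rate function on `C[0,1]`: `I(f) = (1/2)∫₀¹ (f')²` if `f` is absolutely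
continuous with an `L²` derivative, and `+∞` otherwise (the infimum over representations of
`f` as an indefinite integral; it is `⊤` when no such representation exists). -/
noncomputable def schilderRate (f : ℝ → ℝ) : ℝ≥0∞ :=
  ⨅ (g : ℝ → ℝ) (_ : MemLp g 2 (volume.restrict (Set.Ioc (0:ℝ) 1)))
    (_ : ∀ t ∈ Set.Icc (0:ℝ) 1, f t = f 0 + ∫ u in Set.Ioc (0:ℝ) t, g u),
    ENNReal.ofReal ((1 / 2) * ∫ u in Set.Ioc (0:ℝ) 1, (g u) ^ 2)

/-- The infimum of the Schilder rate function over
`M = {f ∈ C[0,1] : ∃ 0 ≤ s ≤ t ≤ 1, f(t) - f(s) - B̃(t-s) ≥ k/A}` equals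
`(1/2)(k/A + B̃)²` if `B̃ ≤ k/A`, and `2B̃k/A` otherwise. -/
theorem schilder_infimum_over_M (A B k : ℝ) (hA : 0 < A) (hB : 0 < B) (hk : 0 < k) :
    (⨅ (f : ℝ → ℝ) (_ : ContinuousOn f (Set.Icc (0:ℝ) 1))
        (_ : ∃ s t : ℝ, 0 ≤ s ∧ s ≤ t ∧ t ≤ 1 ∧ k / A ≤ f t - f s - B * (t - s)),
        schilderRate f) =
      ENNReal.ofReal (if B ≤ k / A then (1 / 2) * (k / A + B) ^ 2 else 2 * B * k / A) := by
  set c := k / A with hc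
  have hc0 : 0 < c := div_pos hk hA
  apply le_antisymm
  · -- upper bound
    by_cases hcase : B ≤ c
    · rw [if_pos hcase]
      refine iInf_le_of_le (fun u => (c + B) * u) ?_
      refine iInf_le_of_le (by fun_prop) ?_
      refine iInf_le_of_le ⟨0, 1, le_refl 0, zero_le_one, le_refl 1, by
        show c ≤ (c + B) * 1 - (c + B) * 0 - B * (1 - 0); nlinarith⟩ ?_
      rw [schilderRate]
      refine iInf_le_of_le (fun _ => c + B) ?_
      refine iInf_le_of_le (memLp_const _) ?_
      refine iInf_le_of_le ?_ ?_
      · intro t ht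
        rw [setIntegral_const, Real.volume_real_Ioc, max_eq_left (by linarith [ht.1]),
          smul_eq_mul]
        ring
      · refine le_of_eq (congrArg _ ?_)
        rw [setIntegral_const, Real.volume_real_Ioc, max_eq_left (by norm_num), smul_eq_mul]
        ring
    · rw [if_neg hcase]
      push_neg at hcase
      set τ := c / B with hτ
      have hτ0 : 0 < τ := div_pos hc0 hB
      have hτ1 : τ < 1 := (div_lt_one hB).2 hcase
      have hBτ : B * τ = c := by rw [hτ]; field_simp
      refine iInf_le_of_le (fun u => 2 * B * min u τ) ?_
      refine iInf_le_of_le (by fun_prop) ?_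
      refine iInf_le_of_le ⟨0, τ, le_refl 0, hτ0.le, hτ1.le, ?_⟩ ?_
      · show c ≤ 2 * B * min τ τ - 2 * B * min 0 τ - B * (τ - 0)
        simp only [min_self, min_eq_left hτ0.le]
        nlinarith
      rw [schilderRate]
      refine iInf_le_of_le ((Set.Ioc 0 τ).indicator fun _ => 2 * B) ?_
      refine iInf_le_of_le ((memLp_const _).indicator measurableSet_Ioc) ?_
      refine iInf_le_of_le ?_ ?_
      · intro t ht
        rw [setIntegral_indicator measurableSet_Ioc, Set.Ioc_inter_Ioc, max_self,
          setIntegral_const, Real.volume_real_Ioc, max_eq_left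
            (by simp [le_min ht.1 hτ0.le] : (0:ℝ) ≤ min t τ - 0), smul_eq_mul]
        simp only [min_eq_left hτ0.le]
        ring_nf
      · refine le_of_eq (congrArg _ ?_)
        have hsq : ∀ u, ((Set.Ioc 0 τ).indicator (fun _ => 2 * B) u) ^ 2
            = (Set.Ioc 0 τ).indicator (fun _ => (2 * B) ^ 2) u := by
          intro u
          by_cases h : u ∈ Set.Ioc 0 τ <;> simp [Set.indicator_apply, h]
        simp_rw [hsq]
        rw [setIntegral_indicator measurableSet_Ioc, Set.Ioc_inter_Ioc, max_self,
          min_eq_right hτ1.le, setIntegral_const, Real.volume_real_Ioc,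
          max_eq_left (by linarith), smul_eq_mul, hτ]
        field_simp
        ring_nf
        rw [hc, div_mul_cancel₀ k hA.ne']
  · -- lower bound
    refine le_iInf fun f => le_iInf fun hf => le_iInf fun hM => ?_
    obtain ⟨s, t, hs0, hst, ht1, hM⟩ := hM
    rw [schilderRate]
    refine le_iInf fun g => le_iInf fun hg2 => le_iInf fun hrep => ?_
    haveI : IsFiniteMeasure (volume.restrict (Set.Ioc (0:ℝ) 1)) :=
      ⟨by rw [Measure.restrict_apply_univ]; simp [Real.volume_Ioc]⟩
    have hInt : IntegrableOn g (Set.Ioc (0:ℝ) 1) volume := hg2.integrable one_le_two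
    have hIntSq : IntegrableOn (fun u => g u ^ 2) (Set.Ioc (0:ℝ) 1) volume := hg2.integrable_sq
    have hsub : Set.Ioc s t ⊆ Set.Ioc (0:ℝ) 1 := Set.Ioc_subset_Ioc hs0 ht1
    have hIg : IntegrableOn g (Set.Ioc s t) volume := hInt.mono_set hsub
    have hIg2 : IntegrableOn (fun u => g u ^ 2) (Set.Ioc s t) volume := hIntSq.mono_set hsub
    set G := ∫ u in Set.Ioc s t, g u with hG
    -- f t - f s = G
    have hsplit : ∫ u in Set.Ioc (0:ℝ) t, g u = (∫ u in Set.Ioc (0:ℝ) s, g u) + G := by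
      rw [hG, ← setIntegral_union (Set.Ioc_disjoint_Ioc_of_le le_rfl) measurableSet_Ioc
        (hInt.mono_set (Set.Ioc_subset_Ioc le_rfl (hst.trans ht1))) hIg,
        Set.Ioc_union_Ioc_eq_Ioc hs0 hst]
    have h1 := hrep t ⟨hs0.trans hst, ht1⟩
    have h2 := hrep s ⟨hs0, hst.trans ht1⟩
    have hGlb : c + B * (t - s) ≤ G := by
      rw [h1, h2, hsplit] at hM; linarith
    have hτ01 : 0 ≤ t - s ∧ t - s ≤ 1 := ⟨by linarith, by linarith⟩
    have key : ∀ l : ℝ, 2 * l * G - l ^ 2 * (t - s) ≤ ∫ u in Set.Ioc (0:ℝ) 1, g u ^ 2 := by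
      intro l
      have hnn : 0 ≤ ∫ u in Set.Ioc s t, (g u - l) ^ 2 :=
        setIntegral_nonneg measurableSet_Ioc fun u _ => sq_nonneg _
      have hexp : ∫ u in Set.Ioc s t, (g u - l) ^ 2
          = (∫ u in Set.Ioc s t, g u ^ 2) - 2 * l * G + l ^ 2 * (t - s) := by
        have hptw : ∀ u, (g u - l) ^ 2 = (g u ^ 2 - 2 * l * g u) + l ^ 2 := fun u => by ring
        have hIb : IntegrableOn (fun u => 2 * l * g u) (Set.Ioc s t) volume :=
          hIg.const_mul (2 * l)
        have hIa : IntegrableOn (fun u => g u ^ 2 - 2 * l * g u) (Set.Ioc s t) volume :=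
          hIg2.sub hIb
        simp_rw [hptw]
        rw [integral_add hIa (integrable_const _),
          integral_sub hIg2 hIb, integral_const_mul,
          setIntegral_const, Real.volume_real_Ioc, max_eq_left hτ01.1, smul_eq_mul, hG]
        ring
      have hmono : ∫ u in Set.Ioc s t, g u ^ 2 ≤ ∫ u in Set.Ioc (0:ℝ) 1, g u ^ 2 :=
        setIntegral_mono_set hIntSq (Filter.Eventually.of_forall fun u => sq_nonneg _)
          (HasSubset.Subset.eventuallyLE hsub)
      linarith
    refine ENNReal.ofReal_le_ofReal ?_
    split_ifs with hcase
    · have h := key (c + B)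
      nlinarith [mul_nonneg (mul_nonneg (by linarith : (0:ℝ) ≤ c + B)
          (by linarith : (0:ℝ) ≤ c - B)) (by linarith [hτ01.2] : (0:ℝ) ≤ 1 - (t - s)),
        mul_nonneg (by linarith : (0:ℝ) ≤ 2 * (c + B))
          (by linarith : (0:ℝ) ≤ G - (c + B * (t - s)))]
    · have h := key (2 * B)
      have h2Bc : 2 * B * k / A = 2 * B * c := by rw [hc]; ring
      rw [h2Bc]
      nlinarith [mul_nonneg (by linarith : (0:ℝ) ≤ 4 * B)
        (by linarith : (0:ℝ) ≤ G - (c + B * (t - s)))]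
end

section
/- Fix Λ ≥ 0, σ > 0, d ≥ 1 and Δ ∈ (0,d). Define I(γ) := (γ−Λ)²/(2σ²) for γ ≥ Λ+σ²d, I(γ) := d(γ−Λ−σ²d/2) for Λ+σ²d/2 ≤ γ ≤ Λ+σ²d, and I(γ) := 0 for γ ≤ Λ+σ²d/2. Then the equation I(γ) = γΔ has a unique positive solution γ₀ given by γ₀ = (d/(d−Δ))·(Λ + σ²d/2) if Λ ≤ (σ²d/Δ)(d/2 − Δ), and γ₀ = Λ + σ²Δ + √(2Λσ²Δ + σ⁴Δ²) otherwise. -/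
set_option maxHeartbeats 1000000


/-- The rate function `I` from Theorem 3.1: the equation `I(γ) = γΔ` has a unique positive
solution `γ₀`, given explicitly by a case distinction on `Λ`. -/
theorem unique_positive_solution_rate_eq
    (Λ σ Δ : ℝ) (d : ℕ) (hΛ : 0 ≤ Λ) (hσ : 0 < σ) (hd : 1 ≤ d)
    (hΔ0 : 0 < Δ) (hΔd : Δ < d)
    (I : ℝ → ℝ)
    (hI : ∀ γ : ℝ, I γ =
      if Λ + σ ^ 2 * d ≤ γ then (γ - Λ) ^ 2 / (2 * σ ^ 2)
      else if Λ + σ ^ 2 * d / 2 ≤ γ then d * (γ - Λ - σ ^ 2 * d / 2)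
      else 0)
    (γ₀ : ℝ)
    (hγ₀ : γ₀ =
      if Λ ≤ σ ^ 2 * d / Δ * (d / 2 - Δ) then d / (d - Δ) * (Λ + σ ^ 2 * d / 2)
      else Λ + σ ^ 2 * Δ + Real.sqrt (2 * Λ * σ ^ 2 * Δ + σ ^ 4 * Δ ^ 2)) :
    (0 < γ₀ ∧ I γ₀ = γ₀ * Δ) ∧ ∀ γ : ℝ, 0 < γ → I γ = γ * Δ → γ = γ₀ := by
  have hσ2 : (0:ℝ) < σ ^ 2 := by positivity
  have hd1 : (1:ℝ) ≤ (d:ℝ) := by exact_mod_cast hd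
  have hdd : (0:ℝ) < (d:ℝ) - Δ := by linarith
  have ha_pos : 0 < Λ + σ ^ 2 * d / 2 := by nlinarith
  have hediv : σ ^ 2 * (d:ℝ) / Δ * ((d:ℝ) / 2 - Δ) = σ ^ 2 * d * ((d:ℝ) / 2 - Δ) / Δ := by
    ring
  -- strict monotonicity of γ ↦ I γ - γΔ on [a, ∞)
  have key : ∀ x y : ℝ, Λ + σ ^ 2 * d / 2 ≤ x → x < y →
      I x - x * Δ < I y - y * Δ := by
    intro x y hx hxy
    rcases le_or_gt (Λ + σ ^ 2 * d) x with hbx | hbx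
    · -- both in the quadratic regime
      have hby : Λ + σ ^ 2 * d ≤ y := by linarith
      rw [hI x, hI y, if_pos hbx, if_pos hby]
      have hdiff : Δ * (y - x) < ((y - Λ) ^ 2 - (x - Λ) ^ 2) / (2 * σ ^ 2) := by
        rw [lt_div_iff₀ (by positivity)]
        nlinarith [mul_nonneg (sub_pos.2 hxy).le
            (show (0:ℝ) ≤ x - Λ - σ ^ 2 * d by linarith),
          mul_pos (sub_pos.2 hxy) hσ2, mul_pos (sub_pos.2 hxy) hdd]
      have e : ((y - Λ) ^ 2 - (x - Λ) ^ 2) / (2 * σ ^ 2)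
          = (y - Λ) ^ 2 / (2 * σ ^ 2) - (x - Λ) ^ 2 / (2 * σ ^ 2) := sub_div _ _ _
      linarith
    · rcases le_or_gt (Λ + σ ^ 2 * d) y with hby | hby
      · -- x linear, y quadratic
        rw [hI x, hI y, if_neg (not_le.2 hbx), if_pos hx, if_pos hby]
        have tangent : (d:ℝ) * (y - Λ - σ ^ 2 * d / 2) ≤ (y - Λ) ^ 2 / (2 * σ ^ 2) := by
          rw [le_div_iff₀ (by positivity)]
          nlinarith [sq_nonneg (y - Λ - σ ^ 2 * d)]
        have hlin : (d:ℝ) * (x - Λ - σ ^ 2 * d / 2) - x * Δ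
            < (d:ℝ) * (y - Λ - σ ^ 2 * d / 2) - y * Δ := by
          nlinarith [mul_pos (sub_pos.2 hxy) hdd]
        linarith
      · -- both linear
        have hay : Λ + σ ^ 2 * d / 2 ≤ y := by linarith
        rw [hI x, hI y, if_neg (not_le.2 hbx), if_pos hx, if_neg (not_le.2 hby), if_pos hay]
        nlinarith [mul_pos (sub_pos.2 hxy) hdd]
  have exist : (Λ + σ ^ 2 * d / 2 ≤ γ₀) ∧ I γ₀ = γ₀ * Δ := by
    by_cases hc : Λ ≤ σ ^ 2 * d / Δ * (d / 2 - Δ)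
    · have hg : γ₀ = d / (d - Δ) * (Λ + σ ^ 2 * d / 2) := by rw [hγ₀, if_pos hc]
      rw [hediv] at hc
      have hmul : Λ * Δ ≤ σ ^ 2 * d * ((d:ℝ) / 2 - Δ) := (le_div_iff₀ hΔ0).1 hc
      have hg2 : γ₀ * ((d:ℝ) - Δ) = d * (Λ + σ ^ 2 * d / 2) := by
        rw [hg, div_mul_eq_mul_div, div_mul_eq_mul_div, div_eq_iff hdd.ne'] <;> ring
      have hga : Λ + σ ^ 2 * d / 2 ≤ γ₀ := by
        nlinarith [hg2, mul_pos hΔ0 ha_pos]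
      have hgb : γ₀ ≤ Λ + σ ^ 2 * d := by
        nlinarith [hg2, hmul]
      refine ⟨hga, ?_⟩
      rw [hI]
      split_ifs with h1
      · have hb : γ₀ = Λ + σ ^ 2 * d := le_antisymm hgb h1
        rw [hb] at hg2 ⊢
        rw [div_eq_iff (by positivity : (2 * σ ^ 2) ≠ 0)]
        linear_combination (2 * σ ^ 2) * hg2
      · linear_combination hg2
    · push_neg at hc
      rw [hediv] at hc
      have hmul : σ ^ 2 * d * ((d:ℝ) / 2 - Δ) < Λ * Δ := (div_lt_iff₀ hΔ0).1 hc
      have hD : 0 ≤ 2 * Λ * σ ^ 2 * Δ + σ ^ 4 * Δ ^ 2 := by positivity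
      have hsq : Real.sqrt (2 * Λ * σ ^ 2 * Δ + σ ^ 4 * Δ ^ 2) ^ 2
          = 2 * Λ * σ ^ 2 * Δ + σ ^ 4 * Δ ^ 2 := Real.sq_sqrt hD
      have hs0 : 0 ≤ Real.sqrt (2 * Λ * σ ^ 2 * Δ + σ ^ 4 * Δ ^ 2) := Real.sqrt_nonneg _
      have hg : γ₀ = Λ + σ ^ 2 * Δ + Real.sqrt (2 * Λ * σ ^ 2 * Δ + σ ^ 4 * Δ ^ 2) := by
        rw [hγ₀, if_neg (by rw [hediv]; exact not_le.2 hc)]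
      have hDgt : (σ ^ 2 * ((d:ℝ) - Δ)) ^ 2 ≤ 2 * Λ * σ ^ 2 * Δ + σ ^ 4 * Δ ^ 2 := by
        nlinarith [hmul, hσ2]
      have hsd : σ ^ 2 * ((d:ℝ) - Δ) ≤ Real.sqrt (2 * Λ * σ ^ 2 * Δ + σ ^ 4 * Δ ^ 2) := by
        have h' := Real.sqrt_le_sqrt hDgt
        rwa [Real.sqrt_sq (mul_nonneg hσ2.le hdd.le)] at h'
      have hgb : Λ + σ ^ 2 * d ≤ γ₀ := by rw [hg]; nlinarith [hsd]
      have hga : Λ + σ ^ 2 * d / 2 ≤ γ₀ := by nlinarith [hgb]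
      refine ⟨hga, ?_⟩
      rw [hI, if_pos hgb, hg]
      rw [div_eq_iff (by positivity : (2 * σ ^ 2) ≠ 0)]
      linear_combination hsq
  obtain ⟨hga, hIg⟩ := exist
  refine ⟨⟨lt_of_lt_of_le ha_pos hga, hIg⟩, ?_⟩
  intro γ hγpos hγeq
  have hγa : Λ + σ ^ 2 * d / 2 ≤ γ := by
    by_contra h
    push_neg at h
    have hz : I γ = 0 := by
      rw [hI, if_neg (by nlinarith), if_neg (by linarith)]
    rw [hz] at hγeq
    nlinarith [mul_pos hγpos hΔ0]
  rcases lt_trichotomy γ γ₀ with h | h | h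
  · have := key γ γ₀ hγa h
    rw [hγeq, hIg] at this
    linarith
  · exact h
  · have := key γ₀ γ hga h
    rw [hγeq, hIg] at this
    linarith
end
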